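/- Let ℓ be an odd prime and p a natural number with ℓ ∣ p − 1, and fix d ≥ 0. Then the function n ↦ p^{binom(n,d)} from ℕ to ℤ is ℓ-adically uniformly continuous: for every k there exists K such that for all n, n', if ℓ^K ∣ n − n' then ℓ^k ∣ p^{binom(n,d)} − p^{binom(n',d)}. -/
import Mathlib

open Finset

private lemma dvd_prod_sub_prod {M : ℤ} {s : Finset ℕ} {f g : ℕ → ℤ}
    (h : ∀ i ∈ s, M ∣ f i - g i) : M ∣ (∏ i ∈ s, f i) - ∏ i ∈ s, g i := by
  classical
  induction s using Finset.induction with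
  | empty => simp
  | @insert a s ha ih =>

    rw [prod_insert ha, prod_insert ha]
    have h1 : M ∣ f a - g a := h a (mem_insert_self a s)
    have h2 : M ∣ (∏ i ∈ s, f i) - ∏ i ∈ s, g i := ih fun i hi => h i (mem_insert_of_mem hi)
    have heq : f a * ∏ i ∈ s, f i - g a * ∏ i ∈ s, g i
        = f a * ((∏ i ∈ s, f i) - ∏ i ∈ s, g i) + (f a - g a) * ∏ i ∈ s, g i := by ring
    rw [heq]
    exact dvd_add (h2.mul_left _) (h1.mul_right _)

private lemma prod_range_cast_sub (d n : ℕ) :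
    (∏ i ∈ range d, ((n : ℤ) - i)) = (Nat.factorial d : ℤ) * (n.choose d : ℤ) := by
  rcases le_or_gt d n with h | h
  · have hcast : ((n.descFactorial d : ℕ) : ℤ) = ∏ i ∈ range d, ((n : ℤ) - i) := by
      rw [Nat.descFactorial_eq_prod_range, Nat.cast_prod]
      refine Finset.prod_congr rfl fun i hi => ?_
      have hin : i ≤ n := le_trans (le_of_lt (mem_range.mp hi)) h
      rw [Nat.cast_sub hin]
    rw [← hcast, Nat.descFactorial_eq_factorial_mul_choose]
    push_cast; ring
  · rw [Nat.choose_eq_zero_of_lt h, Finset.prod_eq_zero (mem_range.mpr h)]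
    · simp
    · simp

private lemma pow_dvd_pow_pow_sub_one {ℓ : ℕ} (x : ℤ) (hx : (ℓ : ℤ) ∣ x - 1) :
    ∀ k : ℕ, (ℓ : ℤ) ^ k ∣ x ^ (ℓ ^ k) - 1 := by
  intro k
  induction k with
  | zero => simpa using one_dvd _
  | succ k ih =>
    set y : ℤ := x ^ (ℓ ^ k) with hy
    have hy1 : (ℓ : ℤ) ∣ y - 1 := by
      refine hx.trans ?_
      simpa using sub_dvd_pow_sub_pow x 1 (ℓ ^ k)
    have hsum : (ℓ : ℤ) ∣ ∑ i ∈ range ℓ, y ^ i := by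
      have h1 : (ℓ : ℤ) ∣ (∑ i ∈ range ℓ, y ^ i) - ℓ := by
        have heq : (∑ i ∈ range ℓ, y ^ i) - (ℓ : ℤ) = ∑ i ∈ range ℓ, (y ^ i - 1) := by
          rw [Finset.sum_sub_distrib]; simp
        rw [heq]
        refine Finset.dvd_sum fun i _ => hy1.trans ?_
        simpa using sub_dvd_pow_sub_pow y 1 i
      have := dvd_add h1 (dvd_refl (ℓ : ℤ))
      simpa using this
    have hgeom : x ^ (ℓ ^ (k + 1)) - 1 = (∑ i ∈ range ℓ, y ^ i) * (y - 1) := by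
      rw [geom_sum_mul, hy, ← pow_mul, pow_succ, mul_comm (ℓ ^ k) ℓ, mul_comm]
    rw [hgeom, pow_succ, mul_comm ((ℓ:ℤ)^k)]
    exact mul_dvd_mul hsum ih
    
theorem stmt_9 (ℓ p : ℕ) (hℓ : ℓ.Prime) (hodd : Odd ℓ) (hdvd : (ℓ : ℤ) ∣ (p : ℤ) - 1)
    (d : ℕ) :
    ∀ k : ℕ, ∃ K : ℕ, ∀ n n' : ℕ, (ℓ : ℤ) ^ K ∣ (n : ℤ) - (n' : ℤ) →
      (ℓ : ℤ) ^ k ∣ (p : ℤ) ^ (Nat.choose n d) - (p : ℤ) ^ (Nat.choose n' d) := by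
  intro k
  set v : ℕ := (Nat.factorial d).factorization ℓ with hv
  refine ⟨k + v, ?_⟩
  -- first: binomial continuity
  have hbin : ∀ n n' : ℕ, (ℓ : ℤ) ^ (k + v) ∣ (n : ℤ) - (n' : ℤ) →
      (ℓ : ℤ) ^ k ∣ (n.choose d : ℤ) - (n'.choose d : ℤ) := by
    intro n n' hnn
    have hprod : (ℓ : ℤ) ^ (k + v) ∣
        (∏ i ∈ range d, ((n : ℤ) - i)) - ∏ i ∈ range d, ((n' : ℤ) - i) :=
      dvd_prod_sub_prod fun i _ => by
        have : ((n : ℤ) - i) - ((n' : ℤ) - i) = (n : ℤ) - n' := by ring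
        rw [this]; exact hnn
    rw [prod_range_cast_sub, prod_range_cast_sub, ← mul_sub] at hprod
    -- d! = ℓ^v * u with ℓ ∤ u
    have hfne : Nat.factorial d ≠ 0 := Nat.factorial_ne_zero d
    have hfac : ℓ ^ v * (Nat.factorial d / ℓ ^ v) = Nat.factorial d := Nat.ordProj_mul_ordCompl_eq_self (Nat.factorial d) ℓ
    have hu : ¬ (ℓ : ℤ) ∣ ((Nat.factorial d / ℓ ^ v : ℕ) : ℤ) := by
      rw [Int.natCast_dvd_natCast]
      exact Nat.not_dvd_ordCompl hℓ hfne
    have hℓ0 : ((ℓ : ℤ)) ≠ 0 := by exact_mod_cast hℓ.ne_zero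
    have hrw : ((Nat.factorial d : ℕ) : ℤ) = (ℓ : ℤ) ^ v * ((Nat.factorial d / ℓ ^ v : ℕ) : ℤ) := by
      conv_lhs => rw [← hfac]
      rw [Nat.cast_mul, Nat.cast_pow]
    rw [hrw, mul_assoc] at hprod
    rw [pow_add, mul_comm ((ℓ:ℤ)^k)] at hprod
    have hcancel : (ℓ : ℤ) ^ k ∣ ((Nat.factorial d / ℓ ^ v : ℕ) : ℤ) * ((n.choose d : ℤ) - (n'.choose d : ℤ)) :=
      (mul_dvd_mul_iff_left (pow_ne_zero v hℓ0)).mp hprod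
    have hp : Prime (ℓ : ℤ) := Nat.prime_iff_prime_int.mp hℓ
    exact hp.pow_dvd_of_dvd_mul_left _ hu hcancel
  intro n n' hnn
  have hk : (ℓ : ℤ) ^ k ∣ (n.choose d : ℤ) - (n'.choose d : ℤ) := hbin n n' hnn
  -- now lift to powers of p
  clear hnn hbin
  set a := n.choose d
  set b := n'.choose d
  -- wlog b ≤ a
  have main : ∀ a b : ℕ, b ≤ a → (ℓ : ℤ) ^ k ∣ (a : ℤ) - (b : ℤ) →
      (ℓ : ℤ) ^ k ∣ (p : ℤ) ^ a - (p : ℤ) ^ b := by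
    intro a b hba hab
    have hnatdvd : ℓ ^ k ∣ a - b := by
      have : ((ℓ ^ k : ℕ) : ℤ) ∣ ((a - b : ℕ) : ℤ) := by
        push_cast [Nat.cast_sub hba]
        exact hab
      exact_mod_cast this
    obtain ⟨m, hm⟩ := hnatdvd
    have hsplit : (p : ℤ) ^ a - (p : ℤ) ^ b = (p : ℤ) ^ b * ((p : ℤ) ^ (a - b) - 1) := by
      rw [mul_sub, mul_one, ← pow_add, Nat.add_sub_cancel' hba]
    rw [hsplit]
    refine Dvd.dvd.mul_left ?_ _
    rw [hm, pow_mul]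
    exact (pow_dvd_pow_pow_sub_one (p : ℤ) hdvd k).trans
      (by simpa using sub_dvd_pow_sub_pow ((p : ℤ) ^ ℓ ^ k) 1 m)
  rcases le_total b a with hba | hab
  · exact main a b hba hk
  · have := main b a hab (by rw [← neg_sub]; exact hk.neg_right)
    rw [← neg_sub]
    exact this.neg_right
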